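/- Let g = so(3) ⊕ ℝ⁶ be equipped with the bracket from the Nomizu construction for T = α e₁₃₅ + α' e₂₄₆ + β(e₂₄₅ + e₂₃₆ + e₁₄₆) and R = β(α−β)[(e₃₅+e₄₆)⊙(e₃₅+e₄₆) + (e₁₅+e₂₆)⊙(e₁₅+e₂₆) + (e₁₃+e₂₄)⊙(e₁₃+e₂₄)], where so(3) = span(H₁,H₃,H₅) with H₁ = -2(E₃₅+E₄₆), H₃ = 2(E₁₅+E₂₆), H₅ = -2(E₁₃+E₂₄). Setting Ω_i := e_i + ((β−α)/2)H_i for i = 1,3,5, the subspace span(Ω₁, Ω₃, Ω₅) is a 3-dimensional Lie subalgebra with [Ω₁,Ω₃] = (α−2β)Ω₅, [Ω₁,Ω₅] = (2β−α)Ω₃, [Ω₃,Ω₅] = (α−2β)Ω₁; it is abelian iff α = 2β and isomorphic to so(3) otherwise. -/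
import Mathlib


/- STATEMENT 18: Let g = so(3) ⊕ ℝ⁶ carry the Nomizu bracket
[A+X, B+Y] = ([A,B] − R(X∧Y)) + (AY − BX − T(X,Y)) for
T = α e₁₃₅ + α' e₂₄₆ + β(e₂₄₅ + e₂₃₆ + e₁₄₆) and
R = β(α−β)[(e₃₅+e₄₆)⊙(e₃₅+e₄₆) + (e₁₅+e₂₆)⊙(e₁₅+e₂₆) + (e₁₃+e₂₄)⊙(e₁₃+e₂₄)],
where so(3) = span(H₁,H₃,H₅), H₁ = −2(E₃₅+E₄₆), H₃ = 2(E₁₅+E₂₆), H₅ = −2(E₁₃+E₂₄).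
Setting Ω_i := e_i + ((β−α)/2)H_i (i = 1,3,5), span(Ω₁,Ω₃,Ω₅) is a 3-dimensional Lie
subalgebra with [Ω₁,Ω₃] = (α−2β)Ω₅, [Ω₁,Ω₅] = (2β−α)Ω₃, [Ω₃,Ω₅] = (α−2β)Ω₁; it is abelian
iff α = 2β, and isomorphic to so(3) otherwise.

g is realized as (Matrix (Fin 6) (Fin 6) ℝ) × (Fin 6 → ℝ) with the Nomizu bracket `br`;
indices are 0-based. ⊙ is the symmetric product ((ω⊙ω)(γ) = ⟨ω,γ⟩ω), so that
R(X∧Y) = β(α−β)·Σ_i ω_i(X,Y)·(matrix of ω_i), which reproduces the explicit brackets listed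
in the paper, e.g. [e₁,e₃] = (β(α−β)/2)H₅ − αe₅. -/

open Matrix

noncomputable section

abbrev M6 := Matrix (Fin 6) (Fin 6) ℝ
abbrev V6 := Fin 6 → ℝ

/-- the elementary skew matrix E_{ij}, sending e_i ↦ e_j and e_j ↦ -e_i -/
def Emat (i j : Fin 6) : M6 :=
  Matrix.of fun p q => (if p = j ∧ q = i then (1 : ℝ) else 0)
    - (if p = i ∧ q = j then (1 : ℝ) else 0)

def H1 : M6 := (-2 : ℝ) • (Emat 2 4 + Emat 3 5)
def H3 : M6 := (2 : ℝ) • (Emat 0 4 + Emat 1 5)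
def H5 : M6 := (-2 : ℝ) • (Emat 0 2 + Emat 1 3)

/-- the 2-form e₃₅ + e₄₆ -/
def w1 (X Y : V6) : ℝ := (X 2 * Y 4 - X 4 * Y 2) + (X 3 * Y 5 - X 5 * Y 3)
/-- the 2-form e₁₅ + e₂₆ -/
def w2 (X Y : V6) : ℝ := (X 0 * Y 4 - X 4 * Y 0) + (X 1 * Y 5 - X 5 * Y 1)
/-- the 2-form e₁₃ + e₂₄ -/
def w3 (X Y : V6) : ℝ := (X 0 * Y 2 - X 2 * Y 0) + (X 1 * Y 3 - X 3 * Y 1)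

/-- the curvature operator R applied to X∧Y, as a matrix -/
def Rmat (al be : ℝ) (X Y : V6) : M6 :=
  (be * (al - be)) •
    (w1 X Y • (Emat 2 4 + Emat 3 5) + w2 X Y • (Emat 0 4 + Emat 1 5)
      + w3 X Y • (Emat 0 2 + Emat 1 3))

def d3 (i j k : Fin 6) (X Y Z : V6) : ℝ :=
  Matrix.det (Matrix.of fun p q => ![X, Y, Z] p (![i, j, k] q))

/-- the torsion 3-form T = α e₁₃₅ + α' e₂₄₆ + β(e₂₄₅ + e₂₃₆ + e₁₄₆) -/
def Tq (al al' be : ℝ) (X Y Z : V6) : ℝ :=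
  al * d3 0 2 4 X Y Z + al' * d3 1 3 5 X Y Z
    + be * (d3 1 3 4 X Y Z + d3 1 2 5 X Y Z + d3 0 3 5 X Y Z)

/-- the vector T(X,Y) dual to T(X,Y,·) -/
def Tv (al al' be : ℝ) (X Y : V6) : V6 := fun k => Tq al al' be X Y (Pi.single k 1)

/-- the Nomizu bracket on g = so(3) ⊕ ℝ⁶ ⊆ gl(6,ℝ) ⊕ ℝ⁶ -/
def br (al al' be : ℝ) (p q : M6 × V6) : M6 × V6 :=
  (p.1 * q.1 - q.1 * p.1 - Rmat al be p.2 q.2,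
    p.1.mulVec q.2 - q.1.mulVec p.2 - Tv al al' be p.2 q.2)

def ee (i : Fin 6) : V6 := Pi.single i 1

def Om1 (al be : ℝ) : M6 × V6 := (((be - al) / 2) • H1, ee 0)
def Om3 (al be : ℝ) : M6 × V6 := (((be - al) / 2) • H3, ee 2)
def Om5 (al be : ℝ) : M6 × V6 := (((be - al) / 2) • H5, ee 4)

/-- so(3): skew-symmetric real 3×3 matrices -/
def so3 : Submodule ℝ (Matrix (Fin 3) (Fin 3) ℝ) where
  carrier := {A | Aᵀ = -A}
  add_mem' := by
    intro x y hx hy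
    simp only [Set.mem_setOf_eq] at *
    simp [Matrix.transpose_add, hx, hy]; abel
  zero_mem' := by simp
  smul_mem' := by
    intro r x hx
    simp only [Set.mem_setOf_eq] at *
    simp [Matrix.transpose_smul, hx]

/-! ### Auxiliary machinery -/

def A1 : Matrix (Fin 3) (Fin 3) ℝ := !![0,0,0; 0,0,-1; 0,1,0]
def A2 : Matrix (Fin 3) (Fin 3) ℝ := !![0,0,1; 0,0,0; -1,0,0]
def A3 : Matrix (Fin 3) (Fin 3) ℝ := !![0,-1,0; 1,0,0; 0,0,0]

set_option maxHeartbeats 4000000 in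
lemma Hcomm (a b d a' b' d' : ℝ) :
    (a•H1+b•H3+d•H5)*(a'•H1+b'•H3+d'•H5) - (a'•H1+b'•H3+d'•H5)*(a•H1+b•H3+d•H5)
    = (-2*(b*d'-d*b'))•H1 + (2*(a*d'-d*a'))•H3 + (-2*(a*b'-b*a'))•H5 := by
  ext i j
  fin_cases i <;> fin_cases j <;>
    simp [H1, H3, H5, Emat, Matrix.mul_apply, Fin.sum_univ_six] <;> ring

set_option maxHeartbeats 2000000 in
lemma Rmat_comb (al be a b d a' b' d' : ℝ) :
    Rmat al be (a•ee 0 + b•ee 2 + d•ee 4) (a'•ee 0 + b'•ee 2 + d'•ee 4)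
    = (be*(al-be)*(d*b'-b*d')/2)•H1 + (be*(al-be)*(a*d'-d*a')/2)•H3
      + (be*(al-be)*(b*a'-a*b')/2)•H5 := by
  ext i j
  fin_cases i <;> fin_cases j <;>
    simp [Rmat, w1, w2, w3, H1, H3, H5, Emat, ee, Pi.single_apply] <;> (first | ring1 | (left; ring1) | tauto)

set_option maxHeartbeats 2000000 in
lemma Hmv (a b d a' b' d' : ℝ) :
    (a•H1+b•H3+d•H5).mulVec (a'•ee 0 + b'•ee 2 + d'•ee 4)
    = (2*(d*b'-b*d'))•ee 0 + (2*(a*d'-d*a'))•ee 2 + (2*(b*a'-a*b'))•ee 4 := by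
  funext k
  fin_cases k <;>
    simp [Matrix.mulVec, dotProduct, Fin.sum_univ_six, H1, H3, H5, Emat, ee,
      Pi.single_apply] <;> ring

set_option maxHeartbeats 2000000 in
lemma Tv_comb (al al' be a b d a' b' d' : ℝ) :
    Tv al al' be (a•ee 0 + b•ee 2 + d•ee 4) (a'•ee 0 + b'•ee 2 + d'•ee 4)
    = (al*(b*d'-d*b'))•ee 0 + (al*(d*a'-a*d'))•ee 2 + (al*(a*b'-b*a'))•ee 4 := by
  funext k
  fin_cases k <;>
    simp [Tv, Tq, d3, Matrix.det_fin_three, ee, Pi.single_apply] <;> (first | ring1 | (left; ring1) | tauto)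

set_option maxHeartbeats 1000000 in
lemma Acomm (a b d a' b' d' : ℝ) :
    (a•A1+b•A2+d•A3)*(a'•A1+b'•A2+d'•A3) - (a'•A1+b'•A2+d'•A3)*(a•A1+b•A2+d•A3)
    = (b*d'-d*b')•A1 + (d*a'-a*d')•A2 + (a*b'-b*a')•A3 := by
  ext i j
  fin_cases i <;> fin_cases j <;>
    simp [A1, A2, A3, Matrix.mul_apply, Fin.sum_univ_three, Matrix.add_apply,
      Matrix.smul_apply, Matrix.vecHead, Matrix.vecTail] <;> ring

lemma comb_fst (al be a b d : ℝ) :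
    (a • Om1 al be + b • Om3 al be + d • Om5 al be).1
      = ((be-al)/2) • (a•H1+b•H3+d•H5) := by
  simp [Om1, Om3, Om5, smul_smul]
  module

lemma comb_snd (al be a b d : ℝ) :
    (a • Om1 al be + b • Om3 al be + d • Om5 al be).2
      = a•ee 0 + b•ee 2 + d•ee 4 := by
  simp [Om1, Om3, Om5]

lemma br_comb (al al' be a b d a' b' d' : ℝ) :
    br al al' be (a • Om1 al be + b • Om3 al be + d • Om5 al be)
      (a' • Om1 al be + b' • Om3 al be + d' • Om5 al be)
    = ((al - 2*be)*(b*d' - d*b')) • Om1 al be + ((al - 2*be)*(d*a' - a*d')) • Om3 al be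
      + ((al - 2*be)*(a*b' - b*a')) • Om5 al be := by
  refine Prod.ext ?_ ?_
  · show _ * _ - _ * _ - Rmat _ _ _ _ = _
    rw [comb_fst, comb_fst, comb_snd, comb_snd, Rmat_comb, comb_fst (a := (al - 2*be)*(b*d' - d*b'))]
    rw [smul_mul_assoc, smul_mul_assoc, mul_smul_comm, mul_smul_comm, smul_smul, smul_smul,
      ← smul_sub, Hcomm]
    match_scalars <;> ring
  · show Matrix.mulVec _ _ - Matrix.mulVec _ _ - Tv _ _ _ _ _ = _
    rw [comb_fst, comb_fst, comb_snd, comb_snd, Matrix.smul_mulVec,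
      Matrix.smul_mulVec, Hmv, Hmv, Tv_comb, comb_snd (a := (al - 2*be)*(b*d' - d*b'))]
    match_scalars <;> ring

lemma mem_comb {al be : ℝ} (a b d : ℝ) :
    a • Om1 al be + b • Om3 al be + d • Om5 al be
      ∈ Submodule.span ℝ {Om1 al be, Om3 al be, Om5 al be} := by
  refine Submodule.add_mem _ (Submodule.add_mem _ ?_ ?_) ?_ <;>
    refine Submodule.smul_mem _ _ (Submodule.subset_span ?_) <;> simp

lemma rep_of_mem {al be : ℝ} {x : M6 × V6}
    (hx : x ∈ Submodule.span ℝ {Om1 al be, Om3 al be, Om5 al be}) :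
    ∃ a b d : ℝ, x = a • Om1 al be + b • Om3 al be + d • Om5 al be := by
  induction hx using Submodule.span_induction with
  | mem x h =>
    simp only [Set.mem_insert_iff, Set.mem_singleton_iff] at h
    rcases h with rfl | rfl | rfl
    · exact ⟨1, 0, 0, by module⟩
    · exact ⟨0, 1, 0, by module⟩
    · exact ⟨0, 0, 1, by module⟩
  | zero => exact ⟨0, 0, 0, by module⟩
  | add x y hx hy ihx ihy =>
    obtain ⟨a, b, d, rfl⟩ := ihx
    obtain ⟨a', b', d', rfl⟩ := ihy
    exact ⟨a + a', b + b', d + d', by module⟩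
  | smul r x hx ih =>
    obtain ⟨a, b, d, rfl⟩ := ih
    exact ⟨r * a, r * b, r * d, by module⟩

/-- the forward linear map to 3×3 matrices -/
def fmap (c : ℝ) : (M6 × V6) →ₗ[ℝ] Matrix (Fin 3) (Fin 3) ℝ where
  toFun p := c • (p.2 0 • A1 + p.2 2 • A2 + p.2 4 • A3)
  map_add' p q := by simp [add_smul]; module
  map_smul' r p := by simp [smul_smul]; module

/-- the backward linear map -/
def gmap (al be c : ℝ) : Matrix (Fin 3) (Fin 3) ℝ →ₗ[ℝ] (M6 × V6) where
  toFun A := c⁻¹ • (A 2 1 • Om1 al be + A 0 2 • Om3 al be + A 1 0 • Om5 al be)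
  map_add' A B := by simp [Matrix.add_apply]; module
  map_smul' r A := by simp [Matrix.smul_apply]; module

lemma fmap_comb (c al be a b d : ℝ) :
    fmap c (a • Om1 al be + b • Om3 al be + d • Om5 al be)
      = c • (a • A1 + b • A2 + d • A3) := by
  simp [fmap, Om1, Om3, Om5, ee, Pi.single_apply]

lemma fmap_mem_so3 (c : ℝ) (p : M6 × V6) : fmap c p ∈ so3 := by
  show _ᵀ = -_
  ext i j
  fin_cases i <;> fin_cases j <;>
    simp [fmap, A1, A2, A3] <;> ring

lemma gmap_mem_span (al be c : ℝ) (A : Matrix (Fin 3) (Fin 3) ℝ) :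
    gmap al be c A ∈ Submodule.span ℝ {Om1 al be, Om3 al be, Om5 al be} :=
  Submodule.smul_mem _ _ (mem_comb _ _ _)

theorem omega_span_subalgebra (al al' be : ℝ) :
    br al al' be (Om1 al be) (Om3 al be) = (al - 2 * be) • Om5 al be
    ∧ br al al' be (Om1 al be) (Om5 al be) = (2 * be - al) • Om3 al be
    ∧ br al al' be (Om3 al be) (Om5 al be) = (al - 2 * be) • Om1 al be
    ∧ (∀ x ∈ Submodule.span ℝ {Om1 al be, Om3 al be, Om5 al be},
        ∀ y ∈ Submodule.span ℝ {Om1 al be, Om3 al be, Om5 al be},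
          br al al' be x y ∈ Submodule.span ℝ {Om1 al be, Om3 al be, Om5 al be})
    ∧ ((br al al' be (Om1 al be) (Om3 al be) = 0
          ∧ br al al' be (Om1 al be) (Om5 al be) = 0
          ∧ br al al' be (Om3 al be) (Om5 al be) = 0) ↔ al = 2 * be)
    ∧ (al ≠ 2 * be →
        ∃ φ : ↥(Submodule.span ℝ {Om1 al be, Om3 al be, Om5 al be}) ≃ₗ[ℝ] ↥so3,
          ∀ (x y : ↥(Submodule.span ℝ {Om1 al be, Om3 al be, Om5 al be}))
            (hm : br al al' be ↑x ↑y ∈ Submodule.span ℝ {Om1 al be, Om3 al be, Om5 al be}),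
            (↑(φ ⟨br al al' be ↑x ↑y, hm⟩) : Matrix (Fin 3) (Fin 3) ℝ)
              = (φ x : Matrix (Fin 3) (Fin 3) ℝ) * (φ y : Matrix (Fin 3) (Fin 3) ℝ)
                - (φ y : Matrix (Fin 3) (Fin 3) ℝ) * (φ x : Matrix (Fin 3) (Fin 3) ℝ)) := by
  have h13 : br al al' be (Om1 al be) (Om3 al be) = (al - 2 * be) • Om5 al be := by
    have h := br_comb al al' be 1 0 0 0 1 0
    simp only [one_smul, zero_smul, add_zero, zero_add] at h
    rw [h]; module
  have h15 : br al al' be (Om1 al be) (Om5 al be) = (2 * be - al) • Om3 al be := by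
    have h := br_comb al al' be 1 0 0 0 0 1
    simp only [one_smul, zero_smul, add_zero, zero_add] at h
    rw [h]; module
  have h35 : br al al' be (Om3 al be) (Om5 al be) = (al - 2 * be) • Om1 al be := by
    have h := br_comb al al' be 0 1 0 0 0 1
    simp only [one_smul, zero_smul, add_zero, zero_add] at h
    rw [h]; module
  refine ⟨h13, h15, h35, ?_, ?_, ?_⟩
  · intro x hx y hy
    obtain ⟨a, b, d, rfl⟩ := rep_of_mem hx
    obtain ⟨a', b', d', rfl⟩ := rep_of_mem hy
    rw [br_comb]
    exact mem_comb _ _ _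
  · constructor
    · rintro ⟨e13, -, -⟩
      rw [h13] at e13
      have h4 := congrArg (fun p => p.2 4) e13
      simp [Om5, ee, Pi.single_apply] at h4
      linarith
    · intro h
      exact ⟨by rw [h13, h]; simp, by rw [h15, h]; simp, by rw [h35, h]; simp⟩
  · intro hne
    have hc : al - 2 * be ≠ 0 := sub_ne_zero.mpr hne
    have hgg : ∀ x y z : ℝ,
        gmap al be (al - 2 * be) (x • A1 + y • A2 + z • A3)
          = (al - 2 * be)⁻¹ • (x • Om1 al be + y • Om3 al be + z • Om5 al be) := by
      intro x y z
      show (al - 2 * be)⁻¹ • (_ • Om1 al be + _ • Om3 al be + _ • Om5 al be) = _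
      simp [A1, A2, A3, Matrix.add_apply, Matrix.smul_apply, Matrix.vecHead, Matrix.vecTail]
    refine ⟨LinearEquiv.ofLinear
      ((fmap (al - 2 * be)).restrict (fun p _ => fmap_mem_so3 (al - 2 * be) p))
      ((gmap al be (al - 2 * be)).restrict
        (fun A _ => gmap_mem_span al be (al - 2 * be) A)) ?_ ?_, ?_⟩
    · apply LinearMap.ext
      rintro ⟨A, hA⟩
      apply Subtype.ext
      have hA' : ∀ i j : Fin 3, A j i = -A i j := by
        intro i j
        have := congrFun (congrFun hA i) j
        simpa using this
      simp only [LinearMap.coe_comp, Function.comp_apply, LinearMap.restrict_coe_apply,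
        LinearMap.id_coe, id_eq]
      show fmap (al - 2 * be) (gmap al be (al - 2 * be) A) = A
      rw [show gmap al be (al - 2 * be) A = (al - 2 * be)⁻¹ •
            (A 2 1 • Om1 al be + A 0 2 • Om3 al be + A 1 0 • Om5 al be) from rfl,
        LinearMap.map_smul, fmap_comb, smul_smul, inv_mul_cancel₀ hc, one_smul]
      ext i j
      fin_cases i <;> fin_cases j <;>
        simp [A1, A2, A3, Matrix.add_apply, Matrix.smul_apply, Matrix.vecHead,
          Matrix.vecTail] <;>
        linarith [hA' 0 0, hA' 1 1, hA' 2 2, hA' 0 1, hA' 0 2, hA' 1 2]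
    · apply LinearMap.ext
      rintro ⟨x, hx⟩
      apply Subtype.ext
      obtain ⟨a, b, d, hrep⟩ := rep_of_mem hx
      simp only [LinearMap.coe_comp, Function.comp_apply, LinearMap.restrict_coe_apply,
        LinearMap.id_coe, id_eq]
      show gmap al be (al - 2 * be) (fmap (al - 2 * be) x) = x
      rw [hrep, fmap_comb, LinearMap.map_smul, hgg, smul_smul, mul_inv_cancel₀ hc, one_smul]
    · intro x y hm
      obtain ⟨a, b, d, hx⟩ := rep_of_mem x.2
      obtain ⟨a', b', d', hy⟩ := rep_of_mem y.2
      simp only [LinearEquiv.ofLinear_apply, LinearMap.restrict_coe_apply]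
      have key : ∀ M N : Matrix (Fin 3) (Fin 3) ℝ,
          ((al - 2 * be) • M) * ((al - 2 * be) • N) - ((al - 2 * be) • N) * ((al - 2 * be) • M)
            = ((al - 2 * be) * (al - 2 * be)) • (M * N - N * M) := by
        intro M N
        rw [smul_mul_assoc, smul_mul_assoc, mul_smul_comm, mul_smul_comm, smul_smul,
          smul_smul, ← smul_sub]
      rw [hx, hy, br_comb, fmap_comb, fmap_comb, fmap_comb, key, Acomm]
      match_scalars <;> ring

end
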